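/- In the situation of a central extension 0 → A → B →π C → 1 of topological G-modules with a continuous section s of π, a continuous derivation γ : G → C satisfies [δ¹(γ)] = 0 in H²(G,A) if and only if γ lifts: there exists a continuous derivation β : G → B with π∘β = γ. Consequently the sequence H¹(G,B) → H¹(G,C) →δ¹ H²(G,A) is exact. -/

import Mathlib

/-!
Let `derivDefect u (g, h) = u g * g • u h * (u (g * h))⁻¹` measure how far a cochain `u : G → B`
is from being a derivation, so that `δ¹(γ) = derivDefect (s ∘ γ)`. Multiplying `u` by the inverse
of a cochain `z` with central values divides its defect by the coboundary of `z`. Hence `δ¹(γ)` is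
the coboundary of an `A`-valued `z` exactly when `z⁻¹ * (s ∘ γ)` is a derivation lifting `γ`, and
every lift `β` arises this way, from `z = (s ∘ γ) * β⁻¹`. Finally, twisting by `s a` a lift of the
cohomologous derivation `a⁻¹ * γ * g • a` gives a lift of `γ` itself.
-/

def IsContDeriv {G A : Type*} [Group G] [TopologicalSpace G] [Group A] [TopologicalSpace A]
    [MulDistribMulAction G A] (α : G → A) : Prop :=
  Continuous α ∧ ∀ g h : G, α (g * h) = α g * g • α h

def Cohom {G A : Type*} [Group G] [Group A] [MulDistribMulAction G A] (α β : G → A) : Prop :=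
  ∃ a : A, ∀ g : G, β g = a⁻¹ * α g * g • a

/-- The connecting 2-cochain `δ¹(γ)(g,h) = s(γ g) * (g • s(γ h)) * s(γ (g*h))⁻¹`. -/
def delta1 {G B C : Type*} [Group G] [Group B] [Group C] [MulDistribMulAction G B]
    (s : C → B) (γ : G → C) : G → G → B :=
  fun g h => s (γ g) * g • s (γ h) * (s (γ (g * h)))⁻¹

open Subgroup

section Defect

variable {G B : Type*} [Group G] [Group B] [MulDistribMulAction G B]

def derivDefect (u : G → B) (g h : G) : B :=
  u g * g • u h * (u (g * h))⁻¹

def coboundary (z : G → B) (g h : G) : B :=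
  g • z h * (z (g * h))⁻¹ * z g

theorem smul_mem_center {c : B} (hc : c ∈ center B) (g : G) : g • c ∈ center B := by
  refine mem_center_iff.mpr fun x => ?_
  rw [← smul_inv_smul g x, ← smul_mul', ← smul_mul', mem_center_iff.mp hc]

theorem derivDefect_inv_mul {z : G → B} (hz : ∀ g, z g ∈ center B) (u : G → B) (g h : G) :
    derivDefect (fun g => (z g)⁻¹ * u g) g h = derivDefect u g h * (coboundary z g h)⁻¹ := by
  simp only [derivDefect, coboundary, smul_mul', smul_inv', mul_inv_rev, inv_inv]
  have ha := inv_mem (hz g)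
  have hb := inv_mem (smul_mem_center (hz h) g)
  have hab := mul_mem ha hb
  generalize (z g)⁻¹ = a, (g • z h)⁻¹ = b, z (g * h) = c, u g = x, g • u h = y,
    (u (g * h))⁻¹ = w at ha hb hab ⊢
  rw [mem_center_iff] at ha hb hab
  calc a * x * (b * y) * (w * c)
      = x * (a * y) * b * w * c := by rw [← ha x, ← hb y]; group
    _ = x * y * (a * b * w) * c := by rw [← ha y]; group
    _ = x * y * w * a * (b * c) := by rw [← hab w]; group
    _ = x * y * w * (a * (c * b)) := by rw [← hb c]; group

theorem derivDefect_eq_one_iff {u : G → B} :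
    (∀ g h, derivDefect u g h = 1) ↔ ∀ g h, u (g * h) = u g * g • u h := by
  simp only [derivDefect, mul_inv_eq_one, eq_comm]

theorem isContDeriv_inv_mul_iff [TopologicalSpace G] [TopologicalSpace B] [ContinuousMul B]
    [ContinuousInv B]
    {z u : G → B} (hz : ∀ g, z g ∈ center B) (hzc : Continuous z) (huc : Continuous u) :
    IsContDeriv (fun g => (z g)⁻¹ * u g) ↔ ∀ g h, derivDefect u g h = coboundary z g h := by
  have hc : Continuous fun g => (z g)⁻¹ * u g := hzc.inv.mul huc
  refine (and_iff_right hc).trans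
    ((derivDefect_eq_one_iff (u := fun g => (z g)⁻¹ * u g)).symm.trans ?_)
  simp only [derivDefect_inv_mul hz, mul_inv_eq_one]

theorem IsContDeriv.inv_mul_mul_smul [TopologicalSpace G] [TopologicalSpace B] [ContinuousMul B]
    [ContinuousSMul G B] {β : G → B} (hβ : IsContDeriv β) (b : B) :
    IsContDeriv (fun g => b⁻¹ * β g * g • b) := by
  refine ⟨(continuous_const.mul hβ.1).mul (continuous_id.smul continuous_const), fun g h => ?_⟩
  simp only [hβ.2 g h, smul_mul', smul_inv', mul_smul]
  group

end Defect

theorem delta_one_kernel_general {G B C : Type*}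
    [Group G] [TopologicalSpace G]
    [Group B] [TopologicalSpace B] [IsTopologicalGroup B] [MulDistribMulAction G B]
    [ContinuousSMul G B]
    [Group C] [TopologicalSpace C] [MulDistribMulAction G C]
    (π : B →* C) (hπeq : ∀ (g : G) (b : B), π (g • b) = g • π b)
    (hcentral : ∀ b : B, π b = 1 → ∀ x : B, b * x = x * b)
    (s : C → B) (hsc : Continuous s) (hs : ∀ c : C, π (s c) = c)
    (γ : G → C) (hγ : IsContDeriv γ) :
    ((∃ z : G → B, Continuous z ∧ (∀ g : G, π (z g) = 1) ∧
        ∀ g h : G, delta1 s γ g h = g • z h * (z (g * h))⁻¹ * z g) ↔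
      ∃ β : G → B, IsContDeriv β ∧ ∀ g : G, π (β g) = γ g) ∧
    ((∃ z : G → B, Continuous z ∧ (∀ g : G, π (z g) = 1) ∧
        ∀ g h : G, delta1 s γ g h = g • z h * (z (g * h))⁻¹ * z g) ↔
      ∃ β : G → B, IsContDeriv β ∧ Cohom (fun g => π (β g)) γ) := by
  have hker : ∀ {b}, π b = 1 → b ∈ center B := fun hb =>
    mem_center_iff.mpr fun x => (hcentral _ hb x).symm
  have hsγ : Continuous (s ∘ γ) := hsc.comp hγ.1
  have hlift : (∃ z : G → B, Continuous z ∧ (∀ g : G, π (z g) = 1) ∧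
      ∀ g h : G, delta1 s γ g h = g • z h * (z (g * h))⁻¹ * z g) ↔
      ∃ β : G → B, IsContDeriv β ∧ ∀ g : G, π (β g) = γ g := by
    constructor
    · rintro ⟨z, hzc, hz1, hδ⟩
      refine ⟨fun g => (z g)⁻¹ * s (γ g), ?_, fun g => by simp [hz1, hs]⟩
      exact (isContDeriv_inv_mul_iff (fun g => hker (hz1 g)) hzc hsγ).mpr hδ
    · rintro ⟨β, hβ, hβγ⟩
      have hz1 : ∀ g, π (s (γ g) * (β g)⁻¹) = 1 := fun g => by simp [hs, hβγ]
      refine ⟨fun g => s (γ g) * (β g)⁻¹, hsγ.mul hβ.1.inv, hz1, ?_⟩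
      refine (isContDeriv_inv_mul_iff (fun g => hker (hz1 g)) (hsγ.mul hβ.1.inv) hsγ).mp ?_
      convert hβ using 2 with g
      simp
  refine ⟨hlift, hlift.trans ⟨fun ⟨β, hβ, hβγ⟩ => ⟨β, hβ, 1, fun g => by simp [hβγ]⟩, ?_⟩⟩
  rintro ⟨β, hβ, a, ha⟩
  exact ⟨_, hβ.inv_mul_mul_smul (s a), fun g => by simp [ha, hπeq, hs]⟩

/-- For a central extension `0 → A → B →π C → 1` of topological `G`-modules with a
continuous section `s` of `π`, a continuous derivation `γ : G → C` has `[δ¹(γ)] = 0`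
in `H²(G,A)` (i.e. `δ¹(γ)` is the coboundary of a continuous `A`-valued 1-cochain)
iff `γ` lifts to a continuous derivation `β : G → B` with `π ∘ β = γ`.
Consequently `H¹(G,B) → H¹(G,C) →δ¹ H²(G,A)` is exact. -/
theorem delta_one_kernel {G B C : Type*}
    [Group G] [TopologicalSpace G] [IsTopologicalGroup G]
    [Group B] [TopologicalSpace B] [IsTopologicalGroup B] [MulDistribMulAction G B]
    [ContinuousSMul G B]
    [Group C] [TopologicalSpace C] [IsTopologicalGroup C] [MulDistribMulAction G C]
    [ContinuousSMul G C]
    (π : B →* C) (hπc : Continuous π) (hπeq : ∀ (g : G) (b : B), π (g • b) = g • π b)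
    (hπsurj : Function.Surjective π)
    (hcentral : ∀ b : B, π b = 1 → ∀ x : B, b * x = x * b)
    (s : C → B) (hsc : Continuous s) (hs : ∀ c : C, π (s c) = c)
    (γ : G → C) (hγ : IsContDeriv γ) :
    ((∃ z : G → B, Continuous z ∧ (∀ g : G, π (z g) = 1) ∧
        ∀ g h : G, delta1 s γ g h = g • z h * (z (g * h))⁻¹ * z g) ↔
      ∃ β : G → B, IsContDeriv β ∧ ∀ g : G, π (β g) = γ g) ∧
    ((∃ z : G → B, Continuous z ∧ (∀ g : G, π (z g) = 1) ∧
        ∀ g h : G, delta1 s γ g h = g • z h * (z (g * h))⁻¹ * z g) ↔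
      ∃ β : G → B, IsContDeriv β ∧ Cohom (fun g => π (β g)) γ) :=
  delta_one_kernel_general π hπeq hcentral s hsc hs γ hγ
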